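/- Key a priori bound (Proposition 4): suppose β_n ≤ C_1 < 1 for all n ≥ N_1, and let u ∈ ℓ²(V,μ) satisfy Δ_θ²u + Wu ∈ ℓ²(V,μ) and Δ_θ²u + Wu = iλ u for some λ ∈ ℝ, where W(x) ≥ −q(r(x)) with q : [0,∞) → (0,∞) non-decreasing. Then there is a constant C independent of n such that for all n ≥ N_1, ‖Δ_θ(χ_n u)‖² ≤ C[β_n‖u‖² + ((q∘r)χ_n u, χ_n u)]. -/

import Mathlib

open scoped BigOperators

/-- The formal magnetic Laplacian on a weighted graph. -/
noncomputable def magLap {V : Type*} (μ : V → ℝ) (b : V → V → ℝ) (θ : V → V → ℝ)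
    (u : V → ℂ) (x : V) : ℂ :=
  (μ x : ℂ)⁻¹ * ∑' y, (b x y : ℂ) * (u x - Complex.exp (Complex.I * (θ x y : ℝ)) * u y)

/-- The term `P_ψ[u]`. -/
noncomputable def magP {V : Type*} (μ : V → ℝ) (b : V → V → ℝ) (θ : V → V → ℝ)
    (ψ u : V → ℂ) (x : V) : ℂ :=
  (μ x : ℂ)⁻¹ *
    ∑' y, (b x y : ℂ) * (ψ x - ψ y) * (u x - Complex.exp (Complex.I * (θ x y : ℝ)) * u y)

/-- The cut-off function `χ_n`. -/
noncomputable def cutoff {V : Type*} (dist : V → ℕ) (n : ℕ) (x : V) : ℝ :=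
  min (max ((2 * (n : ℝ) - (dist x : ℝ)) / (n : ℝ)) 0) 1

/-- Squared norm in `ℓ²(V, μ)`. -/
noncomputable def wnormSq {V : Type*} (μ : V → ℝ) (f : V → ℂ) : ℝ :=
  ∑' x, μ x * ‖f x‖ ^ 2

/-- Inner product in `ℓ²(V, μ)`. -/
noncomputable def wInner {V : Type*} (μ : V → ℝ) (f g : V → ℂ) : ℂ :=
  ∑' x, (μ x : ℂ) * f x * (starRingEnd ℂ) (g x)

/-!
Near the support of `χ_n`, `Δ_θ` agrees with the magnetic Laplacian `Δ_F` of the subgraph induced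
on the finite ball `F = {r ≤ 2n + 1}`, which is symmetric on `ℓ²(F, μ)`. Commuting `Δ_F`
with a cut-off `ψ` produces an edge operator with coefficients `ψ x - ψ y = O(1/n)`; where these
live inside `{r ≤ 2n}`, Schur's test bounds it by `β_n`. For the cut-off `ψ ≤ χ_n` shifted one step
inwards, `‖ψ Δu‖² = Re (Δu, ψ² Δu) = Re (Δ²u, ψ² u) - Re (Δu, [Δ, ψ²] u)`; the equation makes the
first term `Re ((iλ - W) u, ψ² u) ≤ ((q∘r) ψ u, ψ u)`, and the commutator term is at most
`2 β_n ‖u‖ ‖ψ Δu‖ + 2 β_n² ‖u‖²`, so `‖ψ Δu‖² ≤ 2 ((q∘r) ψ u, ψ u) + 8 β_n² ‖u‖²`. Finally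
`Δ(χ_n u) = ψ Δu + [Δ, ψ] u + Δ((χ_n - ψ) u)`, and `β_n ≤ 1` gives the bound with `C = 34`.
The shift keeps every commutator term, and its Laplacian, inside `{r ≤ 2n}`, where the degree
bound `d_{2n} p_{2n}` applies.
-/

open ComplexConjugate
open scoped InnerProductSpace

/-- Schur's test. -/
theorem Finset.sum_norm_sum_mul_sq_le {ι κ 𝕜 : Type*} [NormedRing 𝕜] (s : Finset ι)
    (t : Finset κ) (k : ι → κ → 𝕜) (a : ι → κ → ℝ) (f : κ → 𝕜) {R C : ℝ} (hR : 0 ≤ R)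
    (hk : ∀ i ∈ s, ∀ j ∈ t, ‖k i j‖ ≤ a i j) (hrow : ∀ i ∈ s, ∑ j ∈ t, a i j ≤ R)
    (hcol : ∀ j ∈ t, ∑ i ∈ s, a i j ≤ C) :
    ∑ i ∈ s, ‖∑ j ∈ t, k i j * f j‖ ^ 2 ≤ R * C * ∑ j ∈ t, ‖f j‖ ^ 2 := by
  have ha : ∀ i ∈ s, ∀ j ∈ t, 0 ≤ a i j := fun i hi j hj => (norm_nonneg _).trans (hk i hi j hj)
  have hrow_sq : ∀ i ∈ s,
      ‖∑ j ∈ t, k i j * f j‖ ^ 2 ≤ R * ∑ j ∈ t, a i j * ‖f j‖ ^ 2 := by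
    intro i hi
    have hnorm : ‖∑ j ∈ t, k i j * f j‖ ≤ ∑ j ∈ t, a i j * ‖f j‖ :=
      (norm_sum_le _ _).trans <| Finset.sum_le_sum fun j hj =>
        (norm_mul_le _ _).trans (by gcongr; exact hk i hi j hj)
    have hcs := Finset.sum_sq_le_sum_mul_sum_of_sq_le_mul t (r := fun j => a i j * ‖f j‖)
      (f := fun j => a i j) (g := fun j => a i j * ‖f j‖ ^ 2) (ha i hi)
      (fun j hj => by positivity [ha i hi j hj]) (fun j _ => by ring_nf; rfl)
    calc ‖∑ j ∈ t, k i j * f j‖ ^ 2 ≤ (∑ j ∈ t, a i j * ‖f j‖) ^ 2 := by gcongr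
      _ ≤ (∑ j ∈ t, a i j) * ∑ j ∈ t, a i j * ‖f j‖ ^ 2 := hcs
      _ ≤ R * ∑ j ∈ t, a i j * ‖f j‖ ^ 2 := by
        gcongr
        · exact Finset.sum_nonneg fun j hj => by positivity [ha i hi j hj]
        · exact hrow i hi
  calc ∑ i ∈ s, ‖∑ j ∈ t, k i j * f j‖ ^ 2 ≤ ∑ i ∈ s, R * ∑ j ∈ t, a i j * ‖f j‖ ^ 2 :=
        Finset.sum_le_sum hrow_sq
    _ = R * ∑ j ∈ t, (∑ i ∈ s, a i j) * ‖f j‖ ^ 2 := by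
        rw [← Finset.mul_sum, Finset.sum_comm]
        simp only [Finset.sum_mul]
    _ ≤ R * ∑ j ∈ t, C * ‖f j‖ ^ 2 := by
        gcongr with j hj
        exact hcol j hj
    _ = R * C * ∑ j ∈ t, ‖f j‖ ^ 2 := by rw [← Finset.mul_sum, mul_assoc]

noncomputable section

variable {V : Type*}

section WeightedL2

variable (μ : V → ℝ) (F : Finset V)

/-- `ℓ²(F, μ)` is realised in `EuclideanSpace ℂ F` through `f ↦ √μ f`, so that its norm and
inner product are the Euclidean ones. -/
def toL2 : (V → ℂ) →ₗ[ℂ] EuclideanSpace ℂ F where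
  toFun f := WithLp.toLp 2 fun x => (√(μ x) : ℂ) * f x
  map_add' f g := by
    ext x
    simp [mul_add]
  map_smul' c f := by
    ext x
    simp only [Pi.smul_apply, smul_eq_mul, RingHom.id_apply, WithLp.ofLp_smul]
    ring

variable {μ F}

lemma inner_toL2 (hμ : ∀ x, 0 ≤ μ x) (f g : V → ℂ) :
    ⟪toL2 μ F f, toL2 μ F g⟫_ℂ = ∑ x ∈ F, (μ x : ℂ) * (conj (f x) * g x) := by
  rw [PiLp.inner_apply, ← Finset.sum_coe_sort F]
  refine Finset.sum_congr rfl fun x _ => ?_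
  simp only [toL2, LinearMap.coe_mk, AddHom.coe_mk, RCLike.inner_apply, map_mul,
    Complex.conj_ofReal]
  have hμx : (μ x : ℂ) = (√(μ x) : ℂ) * √(μ x) := by
    rw [← Complex.ofReal_mul, Real.mul_self_sqrt (hμ x)]
  rw [hμx]
  ring

lemma norm_toL2_sq (hμ : ∀ x, 0 ≤ μ x) (f : V → ℂ) :
    ‖toL2 μ F f‖ ^ 2 = ∑ x ∈ F, μ x * ‖f x‖ ^ 2 := by
  rw [EuclideanSpace.norm_eq, Real.sq_sqrt (by positivity), ← Finset.sum_coe_sort F]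
  refine Finset.sum_congr rfl fun x _ => ?_
  simp only [toL2, LinearMap.coe_mk, AddHom.coe_mk, norm_mul, Complex.norm_real,
    Real.norm_eq_abs, abs_of_nonneg (Real.sqrt_nonneg _), mul_pow, Real.sq_sqrt (hμ x)]

lemma norm_toL2_le_of_norm_le (hμ : ∀ x, 0 ≤ μ x) {M : ℝ} (hM : 0 ≤ M) {f g : V → ℂ}
    (h : ∀ x ∈ F, ‖g x‖ ≤ M * ‖f x‖) : ‖toL2 μ F g‖ ≤ M * ‖toL2 μ F f‖ := by
  refine (sq_le_sq₀ (norm_nonneg _) (by positivity)).mp ?_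
  rw [mul_pow, norm_toL2_sq hμ, norm_toL2_sq hμ, Finset.mul_sum]
  refine Finset.sum_le_sum fun x hx => ?_
  have := pow_le_pow_left₀ (norm_nonneg _) (h x hx) 2
  rw [mul_pow] at this
  nlinarith [hμ x]

lemma inner_toL2_ofReal_mul (hμ : ∀ x, 0 ≤ μ x) (φ : V → ℝ) (f g : V → ℂ) :
    ⟪toL2 μ F (fun x => (φ x : ℂ) * f x), toL2 μ F g⟫_ℂ
      = ⟪toL2 μ F f, toL2 μ F (fun x => (φ x : ℂ) * g x)⟫_ℂ := by
  simp only [inner_toL2 hμ, map_mul, Complex.conj_ofReal]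
  exact Finset.sum_congr rfl fun x _ => by ring

lemma norm_toL2_ofReal_mul_sq (hμ : ∀ x, 0 ≤ μ x) (φ : V → ℝ) (f : V → ℂ) :
    ‖toL2 μ F (fun x => (φ x : ℂ) * f x)‖ ^ 2
      = (⟪toL2 μ F f, toL2 μ F (fun x => ((φ x ^ 2 : ℝ) : ℂ) * f x)⟫_ℂ).re := by
  have hsq : (fun x => (φ x : ℂ) * ((φ x : ℂ) * f x)) = fun x => ((φ x ^ 2 : ℝ) : ℂ) * f x := by
    funext x
    push_cast
    ring
  rw [← inner_self_eq_norm_sq (𝕜 := ℂ), inner_toL2_ofReal_mul hμ, hsq]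
  rfl

lemma norm_toL2_sq_le_wnormSq (hμ : ∀ x, 0 ≤ μ x) {f : V → ℂ}
    (hf : Summable fun x => μ x * ‖f x‖ ^ 2) : ‖toL2 μ F f‖ ^ 2 ≤ wnormSq μ f := by
  rw [norm_toL2_sq hμ]
  exact hf.sum_le_tsum F fun x _ => by positivity [hμ x]

lemma wnormSq_eq_norm_toL2_sq (hμ : ∀ x, 0 ≤ μ x) {f : V → ℂ} (hf : ∀ x ∉ F, f x = 0) :
    wnormSq μ f = ‖toL2 μ F f‖ ^ 2 := by
  rw [norm_toL2_sq hμ, wnormSq]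
  exact tsum_eq_sum fun x hx => by simp [hf x hx]

lemma norm_toL2_sum_mul_le {μ₀ : ℝ} (hμ₀ : 0 < μ₀) (hμ : ∀ x, μ₀ ≤ μ x) (k : V → V → ℂ)
    (a : V → V → ℝ) {R : ℝ} (hR : 0 ≤ R) (hk : ∀ x ∈ F, ∀ y ∈ F, ‖k x y‖ ≤ a x y)
    (hrow : ∀ x ∈ F, ∑ y ∈ F, a x y ≤ R) (hcol : ∀ y ∈ F, ∑ x ∈ F, a x y ≤ R) (f : V → ℂ) :
    ‖toL2 μ F (fun x => (μ x : ℂ)⁻¹ * ∑ y ∈ F, k x y * f y)‖ ≤ μ₀⁻¹ * R * ‖toL2 μ F f‖ := by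
  have hμ0 : ∀ x, 0 ≤ μ x := fun x => hμ₀.le.trans (hμ x)
  refine (sq_le_sq₀ (norm_nonneg _) (by positivity)).mp ?_
  rw [norm_toL2_sq hμ0, mul_pow, norm_toL2_sq hμ0, mul_pow]
  have hweight : ∑ y ∈ F, ‖f y‖ ^ 2 ≤ μ₀⁻¹ * ∑ y ∈ F, μ y * ‖f y‖ ^ 2 := by
    rw [Finset.mul_sum]
    refine Finset.sum_le_sum fun y _ => ?_
    calc ‖f y‖ ^ 2 = μ₀⁻¹ * (μ₀ * ‖f y‖ ^ 2) := by field_simp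
      _ ≤ μ₀⁻¹ * (μ y * ‖f y‖ ^ 2) := by gcongr; exact hμ y
  calc ∑ x ∈ F, μ x * ‖(μ x : ℂ)⁻¹ * ∑ y ∈ F, k x y * f y‖ ^ 2
      = ∑ x ∈ F, (μ x)⁻¹ * ‖∑ y ∈ F, k x y * f y‖ ^ 2 := by
        refine Finset.sum_congr rfl fun x _ => ?_
        rw [norm_mul, norm_inv, Complex.norm_real, Real.norm_eq_abs, abs_of_nonneg (hμ0 x)]
        field_simp [(hμ₀.trans_le (hμ x)).ne']
    _ ≤ μ₀⁻¹ * ∑ x ∈ F, ‖∑ y ∈ F, k x y * f y‖ ^ 2 := by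
        rw [Finset.mul_sum]
        gcongr with x
        exact hμ x
    _ ≤ μ₀⁻¹ * (R * R * ∑ y ∈ F, ‖f y‖ ^ 2) := by
        gcongr
        exact Finset.sum_norm_sum_mul_sq_le F F k a f hR hk hrow hcol
    _ ≤ μ₀⁻¹ * (R * R * (μ₀⁻¹ * ∑ y ∈ F, μ y * ‖f y‖ ^ 2)) := by gcongr
    _ = μ₀⁻¹ ^ 2 * R ^ 2 * ∑ y ∈ F, μ y * ‖f y‖ ^ 2 := by ring

end WeightedL2

section MagneticLaplacian

variable (μ : V → ℝ) (b θ : V → V → ℝ) (F : Finset V)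

def phase (x y : V) : ℂ := Complex.exp (Complex.I * θ x y)

/-- The magnetic Laplacian of the subgraph induced on `F`. -/
def lapOn : (V → ℂ) →ₗ[ℂ] V → ℂ where
  toFun f x := (μ x : ℂ)⁻¹ * ∑ y ∈ F, b x y * (f x - phase θ x y * f y)
  map_add' f g := by
    ext x
    simp only [Pi.add_apply, ← mul_add, ← Finset.sum_add_distrib]
    congr 1
    exact Finset.sum_congr rfl fun y _ => by ring
  map_smul' c f := by
    ext x
    simp only [Pi.smul_apply, smul_eq_mul, RingHom.id_apply, Finset.mul_sum]
    exact Finset.sum_congr rfl fun y _ => by ring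

def edgeOp (c : V → V → ℝ) (f : V → ℂ) (x : V) : ℂ :=
  (μ x : ℂ)⁻¹ * ∑ y ∈ F, ((b x y * c x y : ℝ) : ℂ) * phase θ x y * f y

variable {μ b θ F}

lemma lapOn_apply (f : V → ℂ) (x : V) :
    lapOn μ b θ F f x = (μ x : ℂ)⁻¹ * ∑ y ∈ F, b x y * (f x - phase θ x y * f y) := rfl

lemma norm_phase (x y : V) : ‖phase θ x y‖ = 1 := by
  rw [phase, mul_comm, Complex.norm_exp_ofReal_mul_I]

lemma conj_phase (hθ : ∀ x y, θ x y = -θ y x) (x y : V) : conj (phase θ x y) = phase θ y x := by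
  rw [phase, phase, ← Complex.exp_conj, map_mul, Complex.conj_I, Complex.conj_ofReal, hθ]
  push_cast
  rw [neg_mul_neg]

lemma magLap_eq_lapOn {f : V → ℂ} {x : V}
    (h : ∀ y ∉ F, b x y = 0 ∨ (f x = 0 ∧ f y = 0)) : magLap μ b θ f x = lapOn μ b θ F f x := by
  rw [magLap, lapOn_apply]
  congr 1
  refine tsum_eq_sum fun y hy => ?_
  rcases h y hy with hb | ⟨hx, hy⟩ <;> simp [*]

lemma inner_toL2_lapOn_left (hμ : ∀ x, 0 < μ x) (hb : ∀ x y, b x y = b y x)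
    (hθ : ∀ x y, θ x y = -θ y x) (f g : V → ℂ) :
    ⟪toL2 μ F (lapOn μ b θ F f), toL2 μ F g⟫_ℂ = ⟪toL2 μ F f, toL2 μ F (lapOn μ b θ F g)⟫_ℂ := by
  have hμ0 : ∀ x, 0 ≤ μ x := fun x => (hμ x).le
  have hswap : ∑ x ∈ F, ∑ y ∈ F, (b x y : ℂ) * conj (phase θ x y) * conj (f y) * g x
      = ∑ x ∈ F, ∑ y ∈ F, (b x y : ℂ) * phase θ x y * conj (f x) * g y := by
    rw [Finset.sum_comm]
    refine Finset.sum_congr rfl fun x _ => Finset.sum_congr rfl fun y _ => ?_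
    rw [conj_phase hθ, hb]
  have hμc : ∀ x, (μ x : ℂ) ≠ 0 := fun x => by exact_mod_cast (hμ x).ne'
  simp only [inner_toL2 hμ0, lapOn_apply, map_mul, map_sum, map_sub, map_inv₀,
    Complex.conj_ofReal]
  calc _ = ∑ x ∈ F, ∑ y ∈ F, ((b x y : ℂ) * conj (f x) * g x
          - (b x y : ℂ) * conj (phase θ x y) * conj (f y) * g x) := by
        refine Finset.sum_congr rfl fun x _ => ?_
        rw [← mul_assoc, mul_inv_cancel_left₀ (hμc x), Finset.sum_mul]
        exact Finset.sum_congr rfl fun y _ => by ring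
    _ = ∑ x ∈ F, ∑ y ∈ F, ((b x y : ℂ) * conj (f x) * g x
          - (b x y : ℂ) * phase θ x y * conj (f x) * g y) := by
        simp only [Finset.sum_sub_distrib, hswap]
    _ = _ := by
        refine Finset.sum_congr rfl fun x _ => ?_
        rw [mul_left_comm, mul_inv_cancel_left₀ (hμc x), Finset.mul_sum]
        exact Finset.sum_congr rfl fun y _ => by ring

lemma lapOn_ofReal_mul (ψ : V → ℝ) (f : V → ℂ) :
    lapOn μ b θ F (fun x => (ψ x : ℂ) * f x)
      = (fun x => (ψ x : ℂ) * lapOn μ b θ F f x) + edgeOp μ b θ F (fun x y => ψ x - ψ y) f := by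
  funext x
  simp only [Pi.add_apply, lapOn_apply, edgeOp, Finset.mul_sum, ← Finset.sum_add_distrib]
  refine Finset.sum_congr rfl fun y _ => ?_
  push_cast
  ring

lemma edgeOp_sq_sub (ψ : V → ℝ) (f : V → ℂ) :
    edgeOp μ b θ F (fun x y => ψ x ^ 2 - ψ y ^ 2) f
      = fun x => 2 * (ψ x : ℂ) * edgeOp μ b θ F (fun x y => ψ x - ψ y) f x
          - edgeOp μ b θ F (fun x y => (ψ x - ψ y) ^ 2) f x := by
  funext x
  simp only [edgeOp, Finset.mul_sum, ← Finset.sum_sub_distrib]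
  refine Finset.sum_congr rfl fun y _ => ?_
  push_cast
  ring

lemma exists_ne_zero_of_edgeOp_ne_zero {c : V → V → ℝ} {f : V → ℂ} {x : V}
    (h : edgeOp μ b θ F c f x ≠ 0) :
    ∃ y, b x y ≠ 0 ∧ c x y ≠ 0 := by
  obtain ⟨y, -, hy⟩ := Finset.exists_ne_zero_of_sum_ne_zero (right_ne_zero_of_mul h)
  refine ⟨y, fun hb => hy ?_, fun hc => hy ?_⟩ <;> simp [*]

end MagneticLaplacian

section Bounds

variable {μ : V → ℝ} {b θ : V → V → ℝ} {F : Finset V} {B : Set V} {Λ δ : ℝ}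

lemma sum_mul_abs_le_mul (hbnn : ∀ x y, 0 ≤ b x y) (hΛ : ∀ x ∈ B, ∑ y ∈ F, b x y ≤ Λ)
    (hδ : 0 ≤ δ) (hΛ₀ : 0 ≤ Λ) {x : V} {c : V → ℝ} (hc : ∀ y, b x y ≠ 0 → |c y| ≤ δ)
    (hcB : ∀ y, b x y ≠ 0 → c y ≠ 0 → x ∈ B) : ∑ y ∈ F, b x y * |c y| ≤ δ * Λ := by
  by_cases hx : x ∈ B
  · calc ∑ y ∈ F, b x y * |c y| ≤ ∑ y ∈ F, δ * b x y := by
          refine Finset.sum_le_sum fun y _ => ?_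
          rcases eq_or_ne (b x y) 0 with hb | hb
          · simp [hb]
          · rw [mul_comm]; exact mul_le_mul_of_nonneg_right (hc y hb) (hbnn x y)
      _ ≤ δ * Λ := by rw [← Finset.mul_sum]; exact mul_le_mul_of_nonneg_left (hΛ x hx) hδ
  · refine le_of_eq_of_le (Finset.sum_eq_zero fun y _ => ?_) (mul_nonneg hδ hΛ₀)
    by_contra h
    exact hx (hcB y (left_ne_zero_of_mul h) (abs_ne_zero.mp (right_ne_zero_of_mul h)))

lemma norm_toL2_edgeOp_le {μ₀ : ℝ} (hμ₀ : 0 < μ₀) (hμ : ∀ x, μ₀ ≤ μ x)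
    (hbsymm : ∀ x y, b x y = b y x) (hbnn : ∀ x y, 0 ≤ b x y)
    (hΛ : ∀ x ∈ B, ∑ y ∈ F, b x y ≤ Λ) (hδ : 0 ≤ δ) (hΛ₀ : 0 ≤ Λ) {c : V → V → ℝ}
    (hc : ∀ x y, b x y ≠ 0 → |c x y| ≤ δ)
    (hcB : ∀ x y, b x y ≠ 0 → c x y ≠ 0 → x ∈ B ∧ y ∈ B) (f : V → ℂ) :
    ‖toL2 μ F (edgeOp μ b θ F c f)‖ ≤ μ₀⁻¹ * (δ * Λ) * ‖toL2 μ F f‖ := by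
  refine norm_toL2_sum_mul_le hμ₀ hμ _ (fun x y => b x y * |c x y|) (by positivity)
    (fun x _ y _ => ?_) (fun x _ => ?_) (fun y _ => ?_) f
  · rw [norm_mul, norm_phase, mul_one, Complex.norm_real, Real.norm_eq_abs, abs_mul,
      abs_of_nonneg (hbnn x y)]
  · exact sum_mul_abs_le_mul hbnn hΛ hδ hΛ₀ (hc x) fun y hb hc => (hcB x y hb hc).1
  · simp only [hbsymm _ y]
    exact sum_mul_abs_le_mul hbnn hΛ hδ hΛ₀ (fun x hb => hc x y (hbsymm x y ▸ hb))
      fun x hb hc => (hcB x y (hbsymm x y ▸ hb) hc).2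

lemma norm_toL2_lapOn_le {μ₀ : ℝ} (hμ₀ : 0 < μ₀) (hμ : ∀ x, μ₀ ≤ μ x)
    (hbsymm : ∀ x y, b x y = b y x) (hbnn : ∀ x y, 0 ≤ b x y)
    (hΛ : ∀ x ∈ B, ∑ y ∈ F, b x y ≤ Λ) (hΛ₀ : 0 ≤ Λ) {g : V → ℂ} (hgB : ∀ x, g x ≠ 0 → x ∈ B)
    (hgN : ∀ x y, b x y ≠ 0 → g y ≠ 0 → x ∈ B) :
    ‖toL2 μ F (lapOn μ b θ F g)‖ ≤ 2 * (μ₀⁻¹ * Λ) * ‖toL2 μ F g‖ := by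
  have hμ0 : ∀ x, 0 ≤ μ x := fun x => hμ₀.le.trans (hμ x)
  set deg : V → ℝ := fun x => (μ x)⁻¹ * ∑ y ∈ F, b x y
  set c : V → V → ℝ := fun _ y => if g y = 0 then 0 else 1
  have hsplit : lapOn μ b θ F g
      = (fun x => (deg x : ℂ) * g x) - edgeOp μ b θ F c g := by
    funext x
    simp only [lapOn_apply, edgeOp, deg, Pi.sub_apply]
    push_cast
    rw [mul_assoc, ← mul_sub, Finset.sum_mul, ← Finset.sum_sub_distrib]
    congr 1
    refine Finset.sum_congr rfl fun y _ => ?_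
    by_cases hy : g y = 0
    · simp [c, hy]
    · simp [c, hy]
      ring
  have hdeg : ‖toL2 μ F (fun x => (deg x : ℂ) * g x)‖ ≤ μ₀⁻¹ * Λ * ‖toL2 μ F g‖ := by
    refine norm_toL2_le_of_norm_le hμ0 (by positivity) fun x _ => ?_
    rcases eq_or_ne (g x) 0 with hx | hx
    · simp [hx]
    have hsum : 0 ≤ ∑ y ∈ F, b x y := Finset.sum_nonneg fun y _ => hbnn x y
    rw [norm_mul, Complex.norm_real, Real.norm_eq_abs, abs_of_nonneg (by positivity [hμ0 x])]
    exact mul_le_mul_of_nonneg_right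
      (mul_le_mul (inv_anti₀ hμ₀ (hμ x)) (hΛ x (hgB x hx)) hsum (by positivity)) (norm_nonneg _)
  have hedge := norm_toL2_edgeOp_le (θ := θ) (F := F) hμ₀ hμ hbsymm hbnn hΛ zero_le_one hΛ₀
    (c := c) (fun x y _ => by simp only [c]; split_ifs <;> simp)
    (fun x y hb hc => by
      have hy : g y ≠ 0 := fun hy => hc (by simp [c, hy])
      exact ⟨hgN x y hb hy, hgB y hy⟩) g
  rw [hsplit, map_sub]
  calc _ ≤ _ := norm_sub_le _ _
    _ ≤ μ₀⁻¹ * Λ * ‖toL2 μ F g‖ + μ₀⁻¹ * (1 * Λ) * ‖toL2 μ F g‖ := add_le_add hdeg hedge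
    _ = 2 * (μ₀⁻¹ * Λ) * ‖toL2 μ F g‖ := by ring

end Bounds

structure IsMagneticGraph (μ₀ : ℝ) (μ : V → ℝ) (b θ : V → V → ℝ) : Prop where
  pos : 0 < μ₀
  le_measure : ∀ x, μ₀ ≤ μ x
  symm : ∀ x y, b x y = b y x
  nonneg : ∀ x y, 0 ≤ b x y
  antisymm : ∀ x y, θ x y = -θ y x

section Localized

variable {μ : V → ℝ} {μ₀ : ℝ} {b θ : V → V → ℝ} {F : Finset V} {d : V → ℕ} {m : ℕ} {Λ δ : ℝ}

lemma norm_toL2_lapOn_le_of_support (hG : IsMagneticGraph μ₀ μ b θ)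
    (hd : ∀ x y, b x y ≠ 0 → d y ≤ d x + 1) (hΛ₀ : 0 ≤ Λ)
    (hΛ : ∀ x, d x ≤ m → ∑ y ∈ F, b x y ≤ Λ) {g : V → ℂ} (hg : ∀ x, g x ≠ 0 → d x + 1 ≤ m) :
    ‖toL2 μ F (lapOn μ b θ F g)‖ ≤ 2 * (μ₀⁻¹ * Λ) * ‖toL2 μ F g‖ :=
  norm_toL2_lapOn_le (B := {x | d x ≤ m}) hG.pos hG.le_measure hG.symm hG.nonneg hΛ hΛ₀
    (fun x hx => show d x ≤ m by have := hg x hx; omega)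
    (fun x y hb hy => show d x ≤ m by
      have := hg y hy
      have := hd y x (hG.symm x y ▸ hb)
      omega)

lemma add_one_le_of_adj_of_ne (hbsymm : ∀ x y, b x y = b y x)
    (hd : ∀ x y, b x y ≠ 0 → d y ≤ d x + 1) {ψ : V → ℝ} (hψm : ∀ x, ψ x ≠ 0 → d x + 2 ≤ m)
    {x y : V} (hb : b x y ≠ 0) (hne : ψ x ≠ ψ y) : d x + 1 ≤ m ∧ d y + 1 ≤ m := by
  have hxy := hd x y hb
  have hyx := hd y x (hbsymm x y ▸ hb)
  by_cases hx : ψ x = 0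
  · have := hψm y fun hy => hne (hx.trans hy.symm)
    omega
  · have := hψm x hx
    omega

lemma norm_toL2_edgeOp_le_of_ne (hG : IsMagneticGraph μ₀ μ b θ)
    (hd : ∀ x y, b x y ≠ 0 → d y ≤ d x + 1) (hΛ₀ : 0 ≤ Λ)
    (hΛ : ∀ x, d x ≤ m → ∑ y ∈ F, b x y ≤ Λ) {ψ : V → ℝ} (hψm : ∀ x, ψ x ≠ 0 → d x + 2 ≤ m)
    {c : V → V → ℝ} {ε : ℝ} (hε : 0 ≤ ε) (hc : ∀ x y, b x y ≠ 0 → |c x y| ≤ ε)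
    (hcψ : ∀ x y, c x y ≠ 0 → ψ x ≠ ψ y) (u : V → ℂ) :
    ‖toL2 μ F (edgeOp μ b θ F c u)‖ ≤ μ₀⁻¹ * (ε * Λ) * ‖toL2 μ F u‖ :=
  norm_toL2_edgeOp_le (B := {x | d x ≤ m}) hG.pos hG.le_measure hG.symm hG.nonneg hΛ hε hΛ₀ hc
    (fun x y hb hne => by
      have := add_one_le_of_adj_of_ne hG.symm hd hψm hb (hcψ x y hne)
      exact ⟨show d x ≤ m by omega, show d y ≤ m by omega⟩) u

lemma add_one_le_of_edgeOp_ne_zero (hbsymm : ∀ x y, b x y = b y x)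
    (hd : ∀ x y, b x y ≠ 0 → d y ≤ d x + 1) {ψ : V → ℝ} (hψm : ∀ x, ψ x ≠ 0 → d x + 2 ≤ m)
    {c : V → V → ℝ} (hcψ : ∀ x y, c x y ≠ 0 → ψ x ≠ ψ y) {u : V → ℂ} {x : V}
    (hx : edgeOp μ b θ F c u x ≠ 0) : d x + 1 ≤ m := by
  obtain ⟨y, hb, hc⟩ := exists_ne_zero_of_edgeOp_ne_zero hx
  exact (add_one_le_of_adj_of_ne hbsymm hd hψm hb (hcψ x y hc)).1

lemma norm_toL2_edgeOp_sub_le (hG : IsMagneticGraph μ₀ μ b θ)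
    (hd : ∀ x y, b x y ≠ 0 → d y ≤ d x + 1) (hΛ₀ : 0 ≤ Λ)
    (hΛ : ∀ x, d x ≤ m → ∑ y ∈ F, b x y ≤ Λ) (hδ : 0 ≤ δ) {ψ : V → ℝ}
    (hψ : ∀ x y, b x y ≠ 0 → |ψ x - ψ y| ≤ δ) (hψm : ∀ x, ψ x ≠ 0 → d x + 2 ≤ m) (u : V → ℂ) :
    ‖toL2 μ F (edgeOp μ b θ F (fun x y => ψ x - ψ y) u)‖ ≤ μ₀⁻¹ * Λ * δ * ‖toL2 μ F u‖ :=
  (norm_toL2_edgeOp_le_of_ne hG hd hΛ₀ hΛ hψm hδ hψ (fun _ _ => sub_ne_zero.mp) u).trans_eq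
    (by ring)

lemma norm_toL2_mul_lapOn_sq_le (hG : IsMagneticGraph μ₀ μ b θ)
    (hd : ∀ x y, b x y ≠ 0 → d y ≤ d x + 1) (hΛ₀ : 0 ≤ Λ)
    (hΛ : ∀ x, d x ≤ m → ∑ y ∈ F, b x y ≤ Λ) (hδ : 0 ≤ δ) {ψ : V → ℝ}
    (hψ : ∀ x y, b x y ≠ 0 → |ψ x - ψ y| ≤ δ) (hψm : ∀ x, ψ x ≠ 0 → d x + 2 ≤ m)
    (u : V → ℂ) {Q : ℝ}
    (hQ : (⟪toL2 μ F (lapOn μ b θ F (lapOn μ b θ F u)),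
      toL2 μ F (fun x => ((ψ x ^ 2 : ℝ) : ℂ) * u x)⟫_ℂ).re ≤ Q) :
    ‖toL2 μ F (fun x => (ψ x : ℂ) * lapOn μ b θ F u x)‖ ^ 2
      ≤ 2 * Q + 8 * (μ₀⁻¹ * Λ * δ * ‖toL2 μ F u‖) ^ 2 := by
  have hμ0 : ∀ x, 0 ≤ μ x := fun x => hG.pos.le.trans (hG.le_measure x)
  have hμpos : ∀ x, 0 < μ x := fun x => hG.pos.trans_le (hG.le_measure x)
  set L := lapOn μ b θ F
  set K₁ := edgeOp μ b θ F (fun x y => ψ x - ψ y) u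
  set K₂ := edgeOp μ b θ F (fun x y => (ψ x - ψ y) ^ 2) u
  set τ := μ₀⁻¹ * Λ * δ * ‖toL2 μ F u‖
  set A := ‖toL2 μ F (fun x => (ψ x : ℂ) * L u x)‖
  have hK₁ : ‖toL2 μ F K₁‖ ≤ τ := norm_toL2_edgeOp_sub_le hG hd hΛ₀ hΛ hδ hψ hψm u
  have hsq : ∀ x y, (ψ x - ψ y) ^ 2 ≠ 0 → ψ x ≠ ψ y := fun x y h =>
    sub_ne_zero.mp (pow_ne_zero_iff two_ne_zero |>.mp h)
  have hK₂ : ‖toL2 μ F K₂‖ ≤ μ₀⁻¹ * (δ ^ 2 * Λ) * ‖toL2 μ F u‖ :=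
    norm_toL2_edgeOp_le_of_ne hG hd hΛ₀ hΛ hψm (sq_nonneg δ)
      (fun x y hb => abs_pow (ψ x - ψ y) 2 ▸ pow_le_pow_left₀ (abs_nonneg _) (hψ x y hb) 2) hsq u
  have hLK₂ : ‖toL2 μ F (L K₂)‖ ≤ 2 * (μ₀⁻¹ * Λ) * (μ₀⁻¹ * (δ ^ 2 * Λ) * ‖toL2 μ F u‖) :=
    (norm_toL2_lapOn_le_of_support hG hd hΛ₀ hΛ fun _ =>
      add_one_le_of_edgeOp_ne_zero hG.symm hd hψm hsq).trans
      (mul_le_mul_of_nonneg_left hK₂ (by positivity [hG.pos.le]))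
  have hdecomp : (fun x => ((ψ x ^ 2 : ℝ) : ℂ) * L u x)
      = L (fun x => ((ψ x ^ 2 : ℝ) : ℂ) * u x) - (2 : ℂ) • (fun x => (ψ x : ℂ) * K₁ x) + K₂ := by
    rw [lapOn_ofReal_mul, edgeOp_sq_sub]
    funext x
    simp only [Pi.add_apply, Pi.sub_apply, Pi.smul_apply, smul_eq_mul, K₁, K₂]
    ring
  have hA : A ^ 2 ≤ Q + 2 * A * τ + 2 * τ ^ 2 := by
    have h₁ : ‖⟪toL2 μ F (fun x => (ψ x : ℂ) * L u x), toL2 μ F K₁⟫_ℂ‖ ≤ A * τ :=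
      (norm_inner_le_norm _ _).trans (mul_le_mul_of_nonneg_left hK₁ (norm_nonneg _))
    have h₂ : ‖⟪toL2 μ F u, toL2 μ F (L K₂)⟫_ℂ‖ ≤ 2 * τ ^ 2 :=
      (norm_inner_le_norm _ _).trans <| (mul_le_mul_of_nonneg_left hLK₂ (norm_nonneg _)).trans_eq
        (by ring)
    have hgreen := inner_toL2_lapOn_left (F := F) hμpos hG.symm hG.antisymm
    rw [norm_toL2_ofReal_mul_sq hμ0, hdecomp, map_add, map_sub, map_smul, inner_add_right,
      inner_sub_right, inner_smul_right, ← hgreen (L u), ← inner_toL2_ofReal_mul hμ0 ψ (L u) K₁,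
      hgreen u K₂]
    simp only [Complex.add_re, Complex.sub_re, Complex.mul_re, Complex.re_ofNat,
      Complex.im_ofNat, zero_mul, sub_zero]
    linarith [(abs_le.mp ((Complex.abs_re_le_norm _).trans h₁)).1,
      (abs_le.mp ((Complex.abs_re_le_norm _).trans h₂)).2]
  nlinarith [sq_nonneg (A - 2 * τ)]

lemma norm_toL2_lapOn_ofReal_mul_sq_le (hG : IsMagneticGraph μ₀ μ b θ)
    (hd : ∀ x y, b x y ≠ 0 → d y ≤ d x + 1) (hΛ₀ : 0 ≤ Λ)
    (hΛ : ∀ x, d x ≤ m → ∑ y ∈ F, b x y ≤ Λ) (hδ : 0 ≤ δ) {χ ψ : V → ℝ}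
    (hψ : ∀ x y, b x y ≠ 0 → |ψ x - ψ y| ≤ δ) (hψm : ∀ x, ψ x ≠ 0 → d x + 2 ≤ m)
    (hχψ : ∀ x, |χ x - ψ x| ≤ δ) (hχm : ∀ x, χ x ≠ 0 → d x + 1 ≤ m) (u : V → ℂ) {Q : ℝ}
    (hQ : (⟪toL2 μ F (lapOn μ b θ F (lapOn μ b θ F u)),
      toL2 μ F (fun x => ((ψ x ^ 2 : ℝ) : ℂ) * u x)⟫_ℂ).re ≤ Q) :
    ‖toL2 μ F (lapOn μ b θ F (fun x => (χ x : ℂ) * u x))‖ ^ 2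
      ≤ 4 * Q + 34 * (μ₀⁻¹ * Λ * δ * ‖toL2 μ F u‖) ^ 2 := by
  have hμ0 : ∀ x, 0 ≤ μ x := fun x => hG.pos.le.trans (hG.le_measure x)
  set L := lapOn μ b θ F
  set τ := μ₀⁻¹ * Λ * δ * ‖toL2 μ F u‖
  set A := ‖toL2 μ F (fun x => (ψ x : ℂ) * L u x)‖
  have hτ : 0 ≤ τ := by positivity [hG.pos.le]
  have hA := norm_toL2_mul_lapOn_sq_le hG hd hΛ₀ hΛ hδ hψ hψm u hQ
  have hsplit : L (fun x => (χ x : ℂ) * u x)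
      = (fun x => (ψ x : ℂ) * L u x) + edgeOp μ b θ F (fun x y => ψ x - ψ y) u
        + L (fun x => ((χ x - ψ x : ℝ) : ℂ) * u x) := by
    rw [← lapOn_ofReal_mul, ← map_add]
    congr 1
    funext x
    simp only [Pi.add_apply, Complex.ofReal_sub]
    ring
  have hK₁ := norm_toL2_edgeOp_sub_le (F := F) (θ := θ) hG hd hΛ₀ hΛ hδ hψ hψm u
  have hrest : ‖toL2 μ F (L (fun x => ((χ x - ψ x : ℝ) : ℂ) * u x))‖ ≤ 2 * τ := by
    refine (norm_toL2_lapOn_le_of_support hG hd hΛ₀ hΛ fun x hx => ?_).trans ?_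
    · by_cases hχ : χ x = 0
      · have := hψm x fun hψ => hx (by simp [hχ, hψ])
        omega
      · exact hχm x hχ
    · refine (mul_le_mul_of_nonneg_left (norm_toL2_le_of_norm_le hμ0 hδ fun x _ => ?_)
        (by positivity [hG.pos.le])).trans_eq (by ring)
      rw [norm_mul, Complex.norm_real, Real.norm_eq_abs]
      exact mul_le_mul_of_nonneg_right (hχψ x) (norm_nonneg _)
  have hnorm : ‖toL2 μ F (L (fun x => (χ x : ℂ) * u x))‖ ≤ A + 3 * τ := by
    rw [hsplit, map_add, map_add]
    refine (norm_add_le _ _).trans ?_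
    linarith [norm_add_le (toL2 μ F (fun x => (ψ x : ℂ) * L u x))
      (toL2 μ F (edgeOp μ b θ F (fun x y => ψ x - ψ y) u))]
  nlinarith [sq_nonneg (A - 3 * τ), norm_nonneg (toL2 μ F (L (fun x => (χ x : ℂ) * u x)))]

end Localized

section Cutoff

variable (r s : V → ℕ) (n : ℕ)

lemma cutoff_nonneg (x : V) : 0 ≤ cutoff r n x := le_min (le_max_right _ _) zero_le_one

lemma cutoff_eq_zero {x : V} (h : 2 * n ≤ r x) : cutoff r n x = 0 := by
  have h' : (2 * n : ℝ) ≤ r x := by exact_mod_cast h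
  rw [cutoff, max_eq_right (div_nonpos_of_nonpos_of_nonneg (by linarith) n.cast_nonneg),
    min_eq_left zero_le_one]

lemma lt_of_cutoff_ne_zero {x : V} (h : cutoff r n x ≠ 0) : r x < 2 * n := by
  by_contra h'
  exact h (cutoff_eq_zero r n (not_lt.mp h'))

lemma abs_cutoff_sub_cutoff_le (x y : V) :
    |cutoff r n x - cutoff s n y| ≤ |(r x : ℝ) - s y| / n := by
  refine (abs_min_sub_min_le_max _ _ _ _).trans ?_
  rw [sub_self, abs_zero, max_le_iff]
  refine ⟨(abs_max_sub_max_le_abs _ _ _).trans_eq ?_, by positivity⟩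
  rw [← sub_div, abs_div, Nat.abs_cast, abs_sub_comm]
  ring_nf

lemma cutoff_le_cutoff {x : V} (h : r x ≤ s x) : cutoff s n x ≤ cutoff r n x := by
  have h' : (r x : ℝ) ≤ s x := by exact_mod_cast h
  unfold cutoff
  gcongr

end Cutoff

theorem SimpleGraph.finite_setOf_dist_le {G : SimpleGraph V} (hconn : G.Connected)
    (hfin : ∀ v, (G.neighborSet v).Finite) (u : V) (m : ℕ) : {v | G.dist u v ≤ m}.Finite := by
  induction m with
  | zero =>
    refine (Set.finite_singleton u).subset fun v hv => ?_
    exact ((hconn.dist_eq_zero_iff).mp (Nat.le_zero.mp hv)).symm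
  | succ m ih =>
    refine (ih.union (ih.biUnion fun w _ => hfin w)).subset fun v hv => ?_
    rcases Nat.lt_or_ge m (G.dist u v) with hlt | hle
    · obtain ⟨p, hp⟩ := hconn.exists_walk_length_eq_dist u v
      have hlen : p.length = m + 1 := by have : G.dist u v ≤ m + 1 := hv; omega
      have hadj := p.adj_getVert_succ (i := m) (by omega)
      rw [← hlen, p.getVert_length] at hadj
      refine Or.inr (Set.mem_biUnion (x := p.getVert m) ?_ hadj)
      exact (SimpleGraph.dist_le (p.take m)).trans (by rw [p.take_length]; omega)
    · exact Or.inl hle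

lemma SimpleGraph.dist_le_dist_add_one_of_adj {G : SimpleGraph V} {u v w : V} (h : G.Adj v w) :
    G.dist u w ≤ G.dist u v + 1 := by
  rcases h.diff_dist_adj (u := u) with h | h | h <;> omega

lemma sum_le_ncard_mul {b : V → ℝ} {P : ℝ} (hfin : {y | 0 < b y}.Finite) (hbnn : ∀ y, 0 ≤ b y)
    (hP : ∀ y, b y ≤ P) (hP₀ : 0 ≤ P) (F : Finset V) :
    ∑ y ∈ F, b y ≤ {y | 0 < b y}.ncard * P := by
  classical
  rw [← Finset.sum_filter_of_ne (p := fun y => 0 < b y) fun y _ hy => (hbnn y).lt_of_ne' hy]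
  refine (Finset.sum_le_card_nsmul _ _ P fun y _ => hP y).trans ?_
  rw [nsmul_eq_mul]
  gcongr
  rw [← Set.ncard_coe_finset]
  exact Set.ncard_le_ncard (fun y hy => (Finset.mem_filter.mp hy).2) hfin

lemma re_inner_toL2_le_of_eigen {μ : V → ℝ} (hμ : ∀ x, 0 ≤ μ x) (F : Finset V) {w u : V → ℂ}
    {W q ψ : V → ℝ} {lam : ℝ} (hWq : ∀ x, -q x ≤ W x)
    (hw : ∀ x, ψ x ≠ 0 → w x + (W x : ℂ) * u x = (lam : ℂ) * Complex.I * u x) :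
    (⟪toL2 μ F w, toL2 μ F (fun x => ((ψ x ^ 2 : ℝ) : ℂ) * u x)⟫_ℂ).re
      ≤ ∑ x ∈ F, μ x * q x * ψ x ^ 2 * ‖u x‖ ^ 2 := by
  rw [inner_toL2 hμ, Complex.re_sum]
  refine Finset.sum_le_sum fun x _ => ?_
  rcases eq_or_ne (ψ x) 0 with hψ | hψ
  · simp [hψ]
  have hterm : (μ x : ℂ) * (conj (w x) * (((ψ x ^ 2 : ℝ) : ℂ) * u x))
      = ((μ x * ψ x ^ 2 * ‖u x‖ ^ 2 : ℝ) : ℂ) * (-(W x : ℂ) - lam * Complex.I) := by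
    rw [eq_sub_of_add_eq (hw x hψ)]
    simp only [map_sub, map_mul, Complex.conj_ofReal, Complex.conj_I]
    push_cast
    linear_combination (μ x * ψ x ^ 2 * (-(W x : ℂ) - lam * Complex.I)) * Complex.conj_mul' (u x)
  rw [hterm, Complex.re_ofReal_mul]
  simp only [Complex.sub_re, Complex.neg_re, Complex.ofReal_re, Complex.mul_re, Complex.I_re,
    Complex.I_im, Complex.ofReal_im, mul_zero, mul_one, sub_zero]
  have hnn : 0 ≤ μ x * ψ x ^ 2 * ‖u x‖ ^ 2 := by positivity [hμ x]
  linarith [mul_le_mul_of_nonneg_left (neg_le.mp (hWq x)) hnn]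

section Ball

variable {μ : V → ℝ} {b θ : V → V → ℝ} {F : Finset V} {d : V → ℕ} {k : ℕ}

lemma magLap_eq_lapOn_of_le (hF : ∀ y, y ∈ F ↔ d y ≤ k + 1)
    (hd : ∀ x y, b x y ≠ 0 → d y ≤ d x + 1) {x : V} (hx : d x ≤ k) (f : V → ℂ) :
    magLap μ b θ f x = lapOn μ b θ F f x :=
  magLap_eq_lapOn fun y hy => Or.inl <| by
    by_contra hb
    exact hy ((hF y).mpr ((hd x y hb).trans (by omega)))

lemma magLap_magLap_eq (hF : ∀ y, y ∈ F ↔ d y ≤ k + 1)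
    (hd : ∀ x y, b x y ≠ 0 → d y ≤ d x + 1) {x : V} (hx : d x + 1 ≤ k) (u : V → ℂ) :
    magLap μ b θ (magLap μ b θ u) x = lapOn μ b θ F (lapOn μ b θ F u) x := by
  rw [magLap_eq_lapOn_of_le hF hd (by omega), lapOn_apply, lapOn_apply]
  congr 1
  refine Finset.sum_congr rfl fun y _ => ?_
  rcases eq_or_ne (b x y) 0 with hb | hb
  · simp [hb]
  have := hd x y hb
  rw [magLap_eq_lapOn_of_le hF hd (by omega : d x ≤ k),
    magLap_eq_lapOn_of_le hF hd (by omega : d y ≤ k)]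

lemma wnormSq_magLap_eq (hμ : ∀ x, 0 ≤ μ x) (hF : ∀ y, y ∈ F ↔ d y ≤ k + 1)
    (hbsymm : ∀ x y, b x y = b y x) (hd : ∀ x y, b x y ≠ 0 → d y ≤ d x + 1) {f : V → ℂ}
    (hf : ∀ x, f x ≠ 0 → d x ≤ k) :
    wnormSq μ (magLap μ b θ f) = ‖toL2 μ F (lapOn μ b θ F f)‖ ^ 2 := by
  have hf' : ∀ x, k < d x → f x = 0 := fun x hx => by
    by_contra h
    exact absurd (hf x h) (by omega)
  have heq : magLap μ b θ f = lapOn μ b θ F f := funext fun x => magLap_eq_lapOn fun y hy => by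
    rcases eq_or_ne (b x y) 0 with hb | hb
    · exact Or.inl hb
    have hy' : k + 1 < d y := by rw [hF] at hy; omega
    have := hd x y hb
    exact Or.inr ⟨hf' x (by omega), hf' y (by omega)⟩
  rw [heq]
  refine wnormSq_eq_norm_toL2_sq hμ fun x hx => ?_
  have hx' : k + 1 < d x := by rw [hF] at hx; omega
  rw [lapOn_apply, Finset.sum_eq_zero fun y _ => ?_, mul_zero]
  rcases eq_or_ne (b x y) 0 with hb | hb
  · simp [hb]
  have := hd y x (hbsymm x y ▸ hb)
  rw [hf' x (by omega), hf' y (by omega)]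
  ring

end Ball

theorem wnormSq_magLap_cutoff_mul_le {μ : V → ℝ} {μ₀ : ℝ} {b θ : V → V → ℝ}
    (hG : IsMagneticGraph μ₀ μ b θ) {d : V → ℕ} (hd : ∀ x y, b x y ≠ 0 → d y ≤ d x + 1) {n : ℕ}
    {F : Finset V} (hF : ∀ x, x ∈ F ↔ d x ≤ 2 * n + 1) {Λ : ℝ} (hΛ₀ : 0 ≤ Λ)
    (hΛ : ∀ x, d x ≤ 2 * n → ∑ y ∈ F, b x y ≤ Λ) {q W : V → ℝ} (hq : ∀ x, 0 ≤ q x)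
    (hWq : ∀ x, -q x ≤ W x) {lam : ℝ} {u : V → ℂ} (hu : Summable fun x => μ x * ‖u x‖ ^ 2)
    (heq : ∀ x, magLap μ b θ (magLap μ b θ u) x + (W x : ℂ) * u x
      = (lam : ℂ) * Complex.I * u x) :
    wnormSq μ (magLap μ b θ (fun x => (cutoff d n x : ℂ) * u x))
      ≤ 4 * ∑' x, μ x * q x * cutoff d n x ^ 2 * ‖u x‖ ^ 2
        + 34 * (Λ / (μ₀ * n)) ^ 2 * wnormSq μ u := by
  have hμ0 : ∀ x, 0 ≤ μ x := fun x => hG.pos.le.trans (hG.le_measure x)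
  set χ := cutoff d n
  set ψ := cutoff (fun x => d x + 1) n
  have hψ : ∀ x y, b x y ≠ 0 → |ψ x - ψ y| ≤ 1 / n := fun x y hb => by
    refine (abs_cutoff_sub_cutoff_le _ _ n x y).trans (div_le_div_of_nonneg_right ?_ n.cast_nonneg)
    have hxy : (d y : ℝ) ≤ d x + 1 := by exact_mod_cast hd x y hb
    have hyx : (d x : ℝ) ≤ d y + 1 := by exact_mod_cast hd y x (hG.symm x y ▸ hb)
    rw [abs_le]
    push_cast
    constructor <;> linarith
  have hψm : ∀ x, ψ x ≠ 0 → d x + 2 ≤ 2 * n := fun x hx => lt_of_cutoff_ne_zero _ n hx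
  have hχψ : ∀ x, |χ x - ψ x| ≤ 1 / n := fun x =>
    (abs_cutoff_sub_cutoff_le _ _ n x x).trans_eq (by push_cast; simp)
  have hχm : ∀ x, χ x ≠ 0 → d x + 1 ≤ 2 * n := fun x hx => lt_of_cutoff_ne_zero _ n hx
  have hQ := re_inner_toL2_le_of_eigen hμ0 F (w := lapOn μ b θ F (lapOn μ b θ F u)) hWq
    (ψ := ψ) fun x hx => by
      rw [← magLap_magLap_eq (k := 2 * n) hF hd (by have := hψm x hx; omega)]
      exact heq x
  have key := norm_toL2_lapOn_ofReal_mul_sq_le hG hd hΛ₀ hΛ (by positivity) hψ hψm hχψ hχm u hQ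
  rw [wnormSq_magLap_eq (k := 2 * n) hμ0 hF hG.symm hd fun x hx => by
    have := hχm x (by exact_mod_cast left_ne_zero_of_mul hx)
    omega]
  have hQχ : ∑ x ∈ F, μ x * q x * ψ x ^ 2 * ‖u x‖ ^ 2
      ≤ ∑' x, μ x * q x * χ x ^ 2 * ‖u x‖ ^ 2 := by
    rw [tsum_eq_sum (s := F) fun x hx => by
      have : χ x = 0 := cutoff_eq_zero d n (by rw [hF] at hx; omega)
      rw [this]
      ring]
    refine Finset.sum_le_sum fun x _ => ?_
    have hψχ : ψ x ≤ χ x := cutoff_le_cutoff _ _ n (Nat.le_succ _)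
    gcongr
    · exact mul_nonneg (hμ0 x) (hq x)
    · exact cutoff_nonneg _ n x
  have hu' := norm_toL2_sq_le_wnormSq (F := F) hμ0 hu
  have hτ : μ₀⁻¹ * Λ * (1 / n) = Λ / (μ₀ * n) := by ring
  rw [hτ] at key
  nlinarith [sq_nonneg (Λ / (μ₀ * n))]

end

theorem key_apriori_bound_general {V : Type*}
    (μ : V → ℝ) (μ₀ : ℝ) (b : V → V → ℝ) (θ : V → V → ℝ)
    (G : SimpleGraph V) (x₀ : V) (D P : ℕ → ℝ)
    (hμ0 : 0 < μ₀) (hμ : ∀ x, μ₀ ≤ μ x)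
    (hbsymm : ∀ x y, b x y = b y x) (hbnn : ∀ x y, 0 ≤ b x y)
    (hloc : ∀ x, {y | 0 < b x y}.Finite)
    (hG : ∀ x y, G.Adj x y ↔ 0 < b x y) (hconn : G.Connected)
    (hθ : ∀ x y, θ x y = -θ y x)
    (hD : ∀ (m : ℕ) (x : V), G.dist x₀ x ≤ m → ({y | 0 < b x y}.ncard : ℝ) ≤ D m)
    (hP : ∀ (m : ℕ) (x y : V), G.dist x₀ x ≤ m → b x y ≤ P m)
    (q : ℝ → ℝ) (hqpos : ∀ s, 0 ≤ s → 0 < q s)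
    (W : V → ℝ) (hW : ∀ x, -q (G.dist x₀ x) ≤ W x)
    (C₁ : ℝ) (hC₁1 : C₁ < 1) (N₁ : ℕ)
    (hβ : ∀ n : ℕ, N₁ ≤ n → D (2 * n) * P (2 * n) / (μ₀ * n) ≤ C₁)
    (lam : ℝ) (u : V → ℂ) (hu : Summable fun x => μ x * ‖u x‖ ^ 2)
    (heq : ∀ x, magLap μ b θ (magLap μ b θ u) x + (W x : ℂ) * u x
      = (lam : ℂ) * Complex.I * u x) :
    ∃ C : ℝ, ∀ n : ℕ, N₁ ≤ n →
      wnormSq μ (magLap μ b θ (fun x => (cutoff (fun z => G.dist x₀ z) n x : ℂ) * u x))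
        ≤ C * ((D (2 * n) * P (2 * n) / (μ₀ * n)) * wnormSq μ u
            + ∑' x, μ x * q (G.dist x₀ x) *
                (cutoff (fun z => G.dist x₀ z) n x) ^ 2 * ‖u x‖ ^ 2) := by
  refine ⟨34, fun n hn => ?_⟩
  have hd : ∀ x y, b x y ≠ 0 → G.dist x₀ y ≤ G.dist x₀ x + 1 := fun x y hb =>
    SimpleGraph.dist_le_dist_add_one_of_adj ((hG x y).mpr ((hbnn x y).lt_of_ne' hb))
  have hball := SimpleGraph.finite_setOf_dist_le hconn
    (fun v => (hloc v).subset fun y hy => (hG v y).mp hy) x₀ (2 * n + 1)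
  have hP₀ : 0 ≤ P (2 * n) := (hbnn x₀ x₀).trans (hP _ x₀ x₀ (by simp))
  have hΛ₀ : 0 ≤ D (2 * n) * P (2 * n) :=
    mul_nonneg ((Nat.cast_nonneg _).trans (hD _ x₀ (by simp))) hP₀
  have key := wnormSq_magLap_cutoff_mul_le ⟨hμ0, hμ, hbsymm, hbnn, hθ⟩ hd
    (F := hball.toFinset) (by simp) hΛ₀
    (fun x hx => (sum_le_ncard_mul (hloc x) (hbnn x) (fun y => hP _ x y hx) hP₀ _).trans
      (mul_le_mul_of_nonneg_right (hD _ x hx) hP₀))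
    (q := fun x => q (G.dist x₀ x)) (fun x => (hqpos _ (Nat.cast_nonneg _)).le) hW hu heq
  set β := D (2 * n) * P (2 * n) / (μ₀ * n)
  have hβ₀ : 0 ≤ β := by positivity
  have hβ₁ : β ≤ 1 := (hβ n hn).trans hC₁1.le
  have hu₀ : 0 ≤ wnormSq μ u := tsum_nonneg fun x => by positivity [hμ0.le.trans (hμ x)]
  have hQ₀ : 0 ≤ ∑' x, μ x * q (G.dist x₀ x) *
      (cutoff (fun z => G.dist x₀ z) n x) ^ 2 * ‖u x‖ ^ 2 := tsum_nonneg fun x => by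
    positivity [hμ0.le.trans (hμ x), (hqpos _ (Nat.cast_nonneg (G.dist x₀ x))).le]
  nlinarith [mul_le_mul_of_nonneg_right (mul_le_mul_of_nonneg_left hβ₁ hβ₀) hu₀]

/-- Key a priori bound (Proposition 4): if `β_n ≤ C₁ < 1` for `n ≥ N₁` and
`u ∈ ℓ²(V,μ)` satisfies `Δ_θ²u + Wu = iλu` with `W ≥ −q∘r`, then there is a constant
`C` independent of `n` with `‖Δ_θ(χ_n u)‖² ≤ C (β_n ‖u‖² + ((q∘r)χ_n u, χ_n u))`. -/
theorem key_apriori_bound {V : Type*} [Countable V]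
    (μ : V → ℝ) (μ₀ : ℝ) (b : V → V → ℝ) (θ : V → V → ℝ)
    (G : SimpleGraph V) (x₀ : V) (D P : ℕ → ℝ)
    (hμ0 : 0 < μ₀) (hμ : ∀ x, μ₀ ≤ μ x)
    (hbsymm : ∀ x y, b x y = b y x) (hbnn : ∀ x y, 0 ≤ b x y) (hbdiag : ∀ x, b x x = 0)
    (hloc : ∀ x, {y | 0 < b x y}.Finite)
    (hG : ∀ x y, G.Adj x y ↔ 0 < b x y) (hconn : G.Connected)
    (hθ : ∀ x y, θ x y = -θ y x) (hθbd : ∀ x y, |θ x y| ≤ Real.pi)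
    (hD : ∀ (m : ℕ) (x : V), G.dist x₀ x ≤ m → ({y | 0 < b x y}.ncard : ℝ) ≤ D m)
    (hP : ∀ (m : ℕ) (x y : V), G.dist x₀ x ≤ m → b x y ≤ P m)
    (q : ℝ → ℝ) (hqpos : ∀ s, 0 ≤ s → 0 < q s)
    (hqmono : ∀ s t, 0 ≤ s → s ≤ t → q s ≤ q t)
    (W : V → ℝ) (hW : ∀ x, -q (G.dist x₀ x) ≤ W x)
    (C₁ : ℝ) (hC₁0 : 0 < C₁) (hC₁1 : C₁ < 1) (N₁ : ℕ) (hN₁ : 1 ≤ N₁)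
    (hβ : ∀ n : ℕ, N₁ ≤ n → D (2 * n) * P (2 * n) / (μ₀ * n) ≤ C₁)
    (lam : ℝ) (u : V → ℂ) (hu : Summable fun x => μ x * ‖u x‖ ^ 2)
    (hHu : Summable fun x =>
      μ x * ‖magLap μ b θ (magLap μ b θ u) x + (W x : ℂ) * u x‖ ^ 2)
    (heq : ∀ x, magLap μ b θ (magLap μ b θ u) x + (W x : ℂ) * u x
      = (lam : ℂ) * Complex.I * u x) :
    ∃ C : ℝ, ∀ n : ℕ, N₁ ≤ n →
      wnormSq μ (magLap μ b θ (fun x => (cutoff (fun z => G.dist x₀ z) n x : ℂ) * u x))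
        ≤ C * ((D (2 * n) * P (2 * n) / (μ₀ * n)) * wnormSq μ u
            + ∑' x, μ x * q (G.dist x₀ x) *
                (cutoff (fun z => G.dist x₀ z) n x) ^ 2 * ‖u x‖ ^ 2) :=
  key_apriori_bound_general μ μ₀ b θ G x₀ D P hμ0 hμ hbsymm hbnn hloc hG hconn hθ hD hP q hqpos W hW
    C₁ hC₁1 N₁ hβ lam u hu heq
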